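/- arXiv:2305.16246 — 3 statements merged into one kernel-verified Lean document; each statement's English description precedes it below -/
import Mathlib

section
/- Let τ > 5 be real and let (x_t) be a sequence of nonnegative reals satisfying x_{t+1} ≤ (1 - 4/(t+τ)) x_t + A/(t+τ)^2 + B/(t+τ)^3 for all t ≥ 0, where A, B ≥ 0. Then for all t ≥ 0, x_{t+1} ≤ 2A/(t+τ) + 8B/(t+τ)^2 + (τ-1)^4 x_0/(t+τ)^4. -/
lemma step_bound (s A B C x0 xt : ℝ) (hs : 4 ≤ s) (hA : 0 ≤ A) (hB : 0 ≤ B)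
    (hC : 0 ≤ C) (hx0 : 0 ≤ x0)
    (ih : xt ≤ 2 * A / s + 8 * B / s ^ 2 + C * x0 / s ^ 4) :
    (1 - 4 / (s + 1)) * xt + A / (s + 1) ^ 2 + B / (s + 1) ^ 3
      ≤ 2 * A / (s + 1) + 8 * B / (s + 1) ^ 2 + C * x0 / (s + 1) ^ 4 := by
  have hs0 : (0:ℝ) < s := by linarith
  have hs1 : (0:ℝ) < s + 1 := by linarith
  have h1 : 0 ≤ 1 - 4 / (s + 1) := by
    rw [sub_nonneg, div_le_one hs1]; linarith
  have h2 : (1 - 4 / (s + 1)) * xt ≤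
      (1 - 4 / (s + 1)) * (2 * A / s + 8 * B / s ^ 2 + C * x0 / s ^ 4) :=
    mul_le_mul_of_nonneg_left ih h1
  have key : (1 - 4 / (s + 1)) * (2 * A / s + 8 * B / s ^ 2 + C * x0 / s ^ 4)
      + A / (s + 1) ^ 2 + B / (s + 1) ^ 3
      ≤ 2 * A / (s + 1) + 8 * B / (s + 1) ^ 2 + C * x0 / (s + 1) ^ 4 := by
    rw [← sub_nonneg]
    have expand : (2 * A / (s + 1) + 8 * B / (s + 1) ^ 2 + C * x0 / (s + 1) ^ 4)
        - ((1 - 4 / (s + 1)) * (2 * A / s + 8 * B / s ^ 2 + C * x0 / s ^ 4)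
          + A / (s + 1) ^ 2 + B / (s + 1) ^ 3)
        = (A * s ^ 3 * (s + 1) ^ 2 * (5 * s + 6)
          + B * s ^ 2 * (s + 1) * (15 * s ^ 2 + 40 * s + 24)
          + C * x0 * (6 * s ^ 2 + 8 * s + 3)) / (s ^ 4 * (s + 1) ^ 4) := by
      field_simp
      ring
    rw [expand]
    have hCx : 0 ≤ C * x0 := mul_nonneg hC hx0
    positivity
  linarith

theorem recursion_bound (τ : ℝ) (hτ : τ > 5) (x : ℕ → ℝ) (A B : ℝ)
    (hx : ∀ t, 0 ≤ x t) (hA : 0 ≤ A) (hB : 0 ≤ B)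
    (hrec : ∀ t : ℕ, x (t + 1) ≤ (1 - 4 / ((t : ℝ) + τ)) * x t
      + A / ((t : ℝ) + τ) ^ 2 + B / ((t : ℝ) + τ) ^ 3) :
    ∀ t : ℕ, x (t + 1) ≤ 2 * A / ((t : ℝ) + τ) + 8 * B / ((t : ℝ) + τ) ^ 2
      + (τ - 1) ^ 4 * x 0 / ((t : ℝ) + τ) ^ 4 := by
  intro t
  induction t with
  | zero =>
    have hτ1 : (0:ℝ) < τ - 1 := by linarith
    have ih0 : x 0 ≤ 2 * A / (τ - 1) + 8 * B / (τ - 1) ^ 2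
        + (τ - 1) ^ 4 * x 0 / (τ - 1) ^ 4 := by
      have hne : (τ - 1) ^ 4 ≠ 0 := by positivity
      have e : (τ - 1) ^ 4 * x 0 / (τ - 1) ^ 4 = x 0 := by
        field_simp
      rw [e]
      have h1 : 0 ≤ 2 * A / (τ - 1) := by positivity
      have h2 : 0 ≤ 8 * B / (τ - 1) ^ 2 := by positivity
      linarith
    have key := step_bound (τ - 1) A B ((τ - 1) ^ 4) (x 0) (x 0)
      (by linarith) hA hB (by positivity) (hx 0) ih0
    have e : τ - 1 + 1 = τ := by ring
    rw [e] at key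
    have h0 := hrec 0
    push_cast at h0 ⊢
    rw [zero_add] at h0 ⊢
    linarith
  | succ t ih =>
    have ht : (0:ℝ) ≤ (t:ℝ) := Nat.cast_nonneg t
    have key := step_bound ((t:ℝ) + τ) A B ((τ - 1) ^ 4) (x 0) (x (t + 1))
      (by linarith) hA hB (by positivity) (hx 0) ih
    have h := hrec (t + 1)
    push_cast at h ⊢
    have e : (t:ℝ) + 1 + τ = (t:ℝ) + τ + 1 := by ring
    rw [e] at h ⊢
    linarith
end

section
/- Let P be an n×n row-stochastic matrix with positive stationary distribution π, D = diag(π), γ ∈ (0,1), and let ‖·‖_D and ‖·‖_Dir be as defined. Then for every V ∈ ℝⁿ, ⟨V, (I − γP)V⟩_D = (1−γ)‖V‖_D² + γ‖V‖_Dir², where ⟨x,y⟩_D = xᵀDy. -/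
open Matrix

theorem inner_D_decomposition (n : ℕ) (P : Matrix (Fin n) (Fin n) ℝ)
    (π : Fin n → ℝ) (γ : ℝ) (hγ : γ ∈ Set.Ioo (0 : ℝ) 1)
    (hPnonneg : ∀ s s', 0 ≤ P s s') (hProw : ∀ s, ∑ s', P s s' = 1)
    (hπpos : ∀ s, 0 < π s) (hπsum : ∑ s, π s = 1)
    (hstat : ∀ s', ∑ s, π s * P s s' = π s')
    (V : Fin n → ℝ) :
    V ⬝ᵥ (Matrix.diagonal π * (1 - γ • P)).mulVec V
      = (1 - γ) * (∑ s, π s * (V s) ^ 2)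
        + γ * ((1 / 2) * ∑ s, ∑ s', π s * P s s' * (V s' - V s) ^ 2) := by
  have hL : V ⬝ᵥ (Matrix.diagonal π * (1 - γ • P)).mulVec V
      = (∑ s, π s * (V s) ^ 2) - γ * ∑ s, ∑ s', π s * P s s' * (V s * V s') := by
    have hM : Matrix.diagonal π * (1 - γ • P)
        = Matrix.diagonal π - γ • (Matrix.diagonal π * P) := by
      rw [Matrix.mul_sub, Matrix.mul_one, Matrix.mul_smul]
    rw [hM, Matrix.sub_mulVec, Matrix.smul_mulVec, dotProduct_sub, dotProduct_smul,
      ← Matrix.mulVec_mulVec]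
    have h1 : V ⬝ᵥ (Matrix.diagonal π).mulVec V = ∑ s, π s * (V s) ^ 2 := by
      simp [dotProduct, Matrix.mulVec_diagonal]
      exact Finset.sum_congr rfl fun s _ => by ring
    have h2 : V ⬝ᵥ (Matrix.diagonal π).mulVec (P.mulVec V)
        = ∑ s, ∑ s', π s * P s s' * (V s * V s') := by
      refine Finset.sum_congr rfl fun s _ => ?_
      rw [Matrix.mulVec_diagonal]
      simp only [Matrix.mulVec, dotProduct, Finset.mul_sum]
      exact Finset.sum_congr rfl fun s' _ => by ring
    rw [h1, h2, smul_eq_mul]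
  have hfirst : ∑ s, ∑ s', π s * P s s' * (V s') ^ 2 = ∑ s, π s * (V s) ^ 2 := by
    rw [Finset.sum_comm]
    refine Finset.sum_congr rfl fun s' _ => ?_
    rw [← Finset.sum_mul]
    · rw [show (∑ s, π s * P s s') = π s' from hstat s']
  have hsecond : ∑ s, ∑ s', π s * P s s' * (V s) ^ 2 = ∑ s, π s * (V s) ^ 2 := by
    refine Finset.sum_congr rfl fun s _ => ?_
    rw [← Finset.sum_mul, ← Finset.mul_sum, hProw s, mul_one]
  have hDir : (1 / 2) * ∑ s, ∑ s', π s * P s s' * (V s' - V s) ^ 2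
      = (∑ s, π s * (V s) ^ 2) - ∑ s, ∑ s', π s * P s s' * (V s * V s') := by
    have : ∀ s s', π s * P s s' * (V s' - V s) ^ 2
        = π s * P s s' * (V s') ^ 2 + π s * P s s' * (V s) ^ 2
          - 2 * (π s * P s s' * (V s * V s')) := by intro s s'; ring
    simp only [this, Finset.sum_sub_distrib, Finset.sum_add_distrib, ← Finset.mul_sum,
      hfirst, hsecond]
    ring
  rw [hL, hDir]; ring
end

section
/- Let P be row-stochastic with positive stationary distribution π, D = diag(π), and γ ∈ (0,1). Then the matrix A = ΦᵀD(I − γP)Φ is positive definite on ℝᴷ whenever Φ has full column rank: θᵀAθ ≥ (1−γ)‖Φθ‖_D² > 0 for all θ ≠ 0. -/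
open Matrix

theorem A_posdef (n K : ℕ) (P : Matrix (Fin n) (Fin n) ℝ)
    (π : Fin n → ℝ) (γ : ℝ) (hγ : γ ∈ Set.Ioo (0 : ℝ) 1)
    (Φ : Matrix (Fin n) (Fin K) ℝ)
    (hPnonneg : ∀ s s', 0 ≤ P s s') (hProw : ∀ s, ∑ s', P s s' = 1)
    (hπpos : ∀ s, 0 < π s) (hπsum : ∑ s, π s = 1)
    (hstat : ∀ s', ∑ s, π s * P s s' = π s')
    (hrank : ∀ θ : Fin K → ℝ, Φ.mulVec θ = 0 → θ = 0)
    (θ : Fin K → ℝ) (hθ : θ ≠ 0) :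
    (1 - γ) * (∑ s, π s * (Φ.mulVec θ s) ^ 2)
        ≤ θ ⬝ᵥ (Φᵀ * Matrix.diagonal π * (1 - γ • P) * Φ).mulVec θ ∧
      0 < (1 - γ) * (∑ s, π s * (Φ.mulVec θ s) ^ 2) := by
  obtain ⟨hγ0, hγ1⟩ := hγ
  set v := Φ.mulVec θ with hvdef
  have hv : v ≠ 0 := fun h => hθ (hrank θ h)
  obtain ⟨s0, hs0'⟩ := Function.ne_iff.mp hv
  have hs0 : v s0 ≠ 0 := by simpa using hs0'
  -- positivity of the sum
  have hsumpos : 0 < ∑ s, π s * v s ^ 2 := by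
    apply Finset.sum_pos' (fun s _ => mul_nonneg (hπpos s).le (sq_nonneg _))
    exact ⟨s0, Finset.mem_univ s0, by
      exact mul_pos (hπpos s0) (by positivity)⟩
  have hpos : 0 < (1 - γ) * (∑ s, π s * v s ^ 2) :=
    mul_pos (by linarith) hsumpos
  refine ⟨?_, hpos⟩
  -- rewrite quadratic form
  have hQ : θ ⬝ᵥ (Φᵀ * Matrix.diagonal π * (1 - γ • P) * Φ).mulVec θ
      = (∑ s, π s * v s ^ 2) - γ * ∑ s, ∑ s', π s * P s s' * (v s * v s') := by
    have h1 : (Φᵀ * Matrix.diagonal π * (1 - γ • P) * Φ).mulVec θ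
        = Φᵀ.mulVec ((Matrix.diagonal π).mulVec ((1 - γ • P).mulVec v)) := by
      rw [hvdef, ← Matrix.mulVec_mulVec, ← Matrix.mulVec_mulVec, ← Matrix.mulVec_mulVec]
    rw [h1, Matrix.dotProduct_mulVec, Matrix.vecMul_transpose, ← hvdef]
    have h2 : ∀ s, (Matrix.diagonal π).mulVec ((1 - γ • P).mulVec v) s
        = π s * (v s - γ * (P.mulVec v) s) := by
      intro s
      simp [Matrix.mulVec_diagonal, Matrix.sub_mulVec, Matrix.smul_mulVec]
    have h3 : v ⬝ᵥ ((Matrix.diagonal π).mulVec ((1 - γ • P).mulVec v))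
        = ∑ s, (π s * v s ^ 2 - ∑ s', γ * (π s * P s s' * (v s * v s'))) := by
      simp only [dotProduct]
      refine Finset.sum_congr rfl fun s _ => ?_
      rw [h2 s]
      have e : γ * (π s * v s) * ∑ s', P s s' * v s'
          = ∑ s', γ * (π s * P s s' * (v s * v s')) := by
        rw [Finset.mul_sum]; exact Finset.sum_congr rfl fun s' _ => by ring
      calc v s * (π s * (v s - γ * (P.mulVec v) s))
          = π s * v s ^ 2 - γ * (π s * v s) * ∑ s', P s s' * v s' := by
            simp only [Matrix.mulVec, dotProduct]; ring
        _ = π s * v s ^ 2 - ∑ s', γ * (π s * P s s' * (v s * v s')) := by rw [e]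
    rw [h3, Finset.sum_sub_distrib]
    congr 1
    rw [Finset.mul_sum]
    exact Finset.sum_congr rfl fun s _ => (Finset.mul_sum _ _ _).symm
  rw [hQ]
  -- key cross-term inequality
  have key : ∑ s, ∑ s', π s * P s s' * (v s * v s') ≤ ∑ s, π s * v s ^ 2 := by
    have step : ∑ s, ∑ s', π s * P s s' * (v s * v s')
        ≤ ∑ s, ∑ s', π s * P s s' * ((v s ^ 2 + v s' ^ 2) / 2) := by
      refine Finset.sum_le_sum fun s _ => Finset.sum_le_sum fun s' _ => ?_
      have hnn : 0 ≤ π s * P s s' := mul_nonneg (hπpos s).le (hPnonneg s s')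
      nlinarith [sq_nonneg (v s - v s')]
    refine step.trans ?_
    have e1 : ∑ s, ∑ s', π s * P s s' * ((v s ^ 2 + v s' ^ 2) / 2)
        = (∑ s, ∑ s', π s * P s s' * v s ^ 2) / 2
          + (∑ s, ∑ s', π s * P s s' * v s' ^ 2) / 2 := by
      rw [Finset.sum_div, Finset.sum_div, ← Finset.sum_add_distrib]
      congr 1; funext s
      rw [Finset.sum_div, Finset.sum_div, ← Finset.sum_add_distrib]
      congr 1; funext s'; ring
    have e2 : ∑ s, ∑ s', π s * P s s' * v s ^ 2 = ∑ s, π s * v s ^ 2 := by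
      congr 1; funext s
      rw [← Finset.sum_mul]
      · have : ∑ s', π s * P s s' = π s := by
          rw [← Finset.mul_sum, hProw s, mul_one]
        rw [this]
    have e3 : ∑ s, ∑ s', π s * P s s' * v s' ^ 2 = ∑ s, π s * v s ^ 2 := by
      rw [Finset.sum_comm]
      congr 1; funext s'
      rw [← Finset.sum_mul, hstat s']
    rw [e1, e2, e3]; linarith
  have := mul_le_mul_of_nonneg_left key hγ0.le
  linarith
end
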